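/- arXiv:math/0102203 — 3 statements merged into one kernel-verified Lean document; each statement's English description precedes it below -/
import Mathlib

section
/- Let W be a complete discrete valuation ring of mixed characteristic with e < p, and fix m, d > 0. The map T ↦ T + ε induces a well-defined W-algebra homomorphism W_{m,d+1} → W_{m,d}[ε] (where ε² = 0), sending γ^n(T) to γ^n(T) + γ^{n-1}(T)ε, and this homomorphism restricts to an isomorphism between the ideal W_{m,d+1}·γ^d(T) ⊆ W_{m,d+1} and the ideal W_{m,d}·γ^{d-1}(T)ε ⊆ W_{m,d}[ε]; in particular there is a commutative diagram of first order extensions 0 → W_{m,d+1}γ^d(T) → W_{m,d+1} → W_{m,d} → 0 mapping to 0 → W_{m,d}γ^{d-1}(T)ε → W_{m,d}[ε] → W_{m,d}[ε]/(γ^{d-1}(T)ε) → 0 with the left vertical map bijective. -/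
theorem aux_mul_eq {R A : Type*} [CommRing R] [CommRing A] [Algebra R A]
    {ι : Type*} [DecidableEq ι] (b : Module.Basis ι R A) (i0 : ι) (t : A)
    (h : ∀ i, b i * t = if i = i0 then t else 0) (a : A) :
    a * t = (b.repr a i0) • t := by
  have key : (LinearMap.mulRight R t) = (b.coord i0).smulRight t := by
    apply b.ext
    intro i
    simp only [LinearMap.mulRight_apply, LinearMap.smulRight_apply, Module.Basis.coord_apply,
      Module.Basis.repr_self, h i, Finsupp.single_apply]
    split <;> simp
  simpa using LinearMap.congr_fun key a

open TrivSqZeroExt DualNumber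

/-- The map T ↦ T + ε induces a W-algebra homomorphism W_{m,d+1} → W_{m,d}[ε] sending
γⁿ(T) ↦ γⁿ(T) + γ^{n-1}(T)ε, which restricts to a bijection between the ideal
(γ^d(T)) ⊆ W_{m,d+1} and the ideal (γ^{d-1}(T)ε) ⊆ W_{m,d}[ε]. -/
theorem stmt10
    (W : Type*) [CommRing W] [IsDomain W] [IsDiscreteValuationRing W]
    [IsAdicComplete (IsLocalRing.maximalIdeal W) W] [CharZero W]
    (p : ℕ) (hp : p.Prime) [CharP (IsLocalRing.ResidueField W) p]
    (u : W) (hu : Irreducible u)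
    (e : ℕ) (he : 0 < e) (hep : e < p) (hpe : Associated ((p : W)) (u ^ e))
    (m d : ℕ) (hm : 0 < m) (hd : 0 < d)
    -- B₁ = W_{m,d+1} with γⁿ(T) = g₁ n :
    (B1 : Type*) [CommRing B1] [Algebra (W ⧸ Ideal.span {u ^ m}) B1]
    (g1 : ℕ → B1) (b1 : Module.Basis (Fin (d + 1)) (W ⧸ Ideal.span {u ^ m}) B1)
    (hb1 : ∀ i : Fin (d + 1), b1 i = g1 i) (h1top : ∀ n, d + 1 ≤ n → g1 n = 0)
    (h1one : g1 0 = 1)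
    (h1mul : ∀ i j, g1 i * g1 j = ((i + j).choose i) • g1 (i + j))
    -- B₂ = W_{m,d} with γⁿ(T) = g₂ n :
    (B2 : Type*) [CommRing B2] [Algebra (W ⧸ Ideal.span {u ^ m}) B2]
    (g2 : ℕ → B2) (b2 : Module.Basis (Fin d) (W ⧸ Ideal.span {u ^ m}) B2)
    (hb2 : ∀ i : Fin d, b2 i = g2 i) (h2top : ∀ n, d ≤ n → g2 n = 0)
    (h2one : g2 0 = 1)
    (h2mul : ∀ i j, g2 i * g2 j = ((i + j).choose i) • g2 (i + j)) :
    ∃ φ : B1 →ₐ[W ⧸ Ideal.span {u ^ m}] DualNumber B2,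
      (∀ n : ℕ, 1 ≤ n → φ (g1 n) =
        TrivSqZeroExt.inl (g2 n) + TrivSqZeroExt.inl (g2 (n - 1)) * DualNumber.eps) ∧
      Set.BijOn φ (Ideal.span {g1 d} : Ideal B1)
        (Ideal.span {TrivSqZeroExt.inl (g2 (d - 1)) * DualNumber.eps} :
          Ideal (DualNumber B2)) := by
  haveI : NeZero d := ⟨hd.ne'⟩
  set R := W ⧸ Ideal.span {u ^ m} with hR
  -- the target values
  set F : ℕ → DualNumber B2 :=
    fun n => if n = 0 then 1 else inl (g2 n) + inl (g2 (n - 1)) * eps with hF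
  have Ffst : ∀ n : ℕ, n ≠ 0 → (F n).fst = g2 n := by
    intro n hn
    simp only [hF, hn, if_false, fst_add, fst_inl, fst_mul, DualNumber.fst_eps, mul_zero,
      add_zero]
  have Fsnd : ∀ n : ℕ, n ≠ 0 → (F n).snd = g2 (n - 1) := by
    intro n hn
    simp only [hF, hn, if_false, snd_add, snd_inl, DualNumber.snd_mul, DualNumber.snd_eps,
      DualNumber.fst_eps, fst_inl, mul_one, mul_zero, zero_mul, zero_add, add_zero]
  -- F is "multiplicative" in the divided-power sense
  have mulF : ∀ i j : ℕ, F i * F j = ((i + j).choose i) • F (i + j) := by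
    intro i j
    rcases Nat.eq_zero_or_pos i with hi | hi
    · subst hi; simp [hF]
    rcases Nat.eq_zero_or_pos j with hj | hj
    · subst hj; simp [hF]
    obtain ⟨k, rfl⟩ : ∃ k, i = k + 1 := ⟨i - 1, by omega⟩
    obtain ⟨l, rfl⟩ : ∃ l, j = l + 1 := ⟨j - 1, by omega⟩
    have hij : k + 1 + (l + 1) = k + l + 1 + 1 := by omega
    rw [hij]
    ext
    · rw [fst_mul, fst_smul, Ffst _ (by omega), Ffst _ (by omega), Ffst _ (by omega),
        h2mul]
      rw [show (k + 1) + (l + 1) = k + l + 1 + 1 by omega]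
    · rw [DualNumber.snd_mul, snd_smul, Ffst _ (by omega), Fsnd _ (by omega),
        Fsnd _ (by omega), Ffst _ (by omega), Fsnd _ (by omega)]
      simp only [Nat.add_sub_cancel]
      rw [h2mul, h2mul]
      rw [show (k + 1) + l = k + l + 1 by omega, show k + (l + 1) = k + l + 1 by omega]
      rw [show (k + l + 1 + 1).choose (k + 1)
          = (k + l + 1).choose k + (k + l + 1).choose (k + 1) from Nat.choose_succ_succ _ _]
      rw [add_smul, add_comm]
  -- the linear map
  set φl : B1 →ₗ[R] DualNumber B2 := b1.constr R (fun i => F i) with hφl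
  have key : ∀ n : ℕ, φl (g1 n) = F n := by
    intro n
    rcases le_or_gt n d with hn | hn
    · rw [← hb1 ⟨n, by omega⟩, hφl]
      exact b1.constr_basis R (fun i => F i) ⟨n, by omega⟩
    · rw [h1top n (by omega), map_zero, hF]
      have hn0 : n ≠ 0 := by omega
      simp only [hn0, if_false, h2top n (by omega), h2top (n - 1) (by omega), inl_zero,
        zero_mul, add_zero]
  have keyone : φl 1 = 1 := by
    rw [← h1one, key, hF]; simp
  have keymul : ∀ x y : B1, φl (x * y) = φl x * φl y := by
    rw [LinearMap.map_mul_iff]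
    apply b1.ext; intro i; apply b1.ext; intro j
    simp only [LinearMap.mul_apply', LinearMap.compr₂_apply, LinearMap.compl₂_apply,
      LinearMap.comp_apply, hb1]
    rw [h1mul, map_nsmul, key, key, key, mulF]
  set φ : B1 →ₐ[R] DualNumber B2 := AlgHom.ofLinearMap φl keyone keymul with hφ
  have hφa : ∀ x : B1, φ x = φl x := fun _ => rfl
  set t2 : DualNumber B2 := inl (g2 (d - 1)) * eps with ht2
  have keyφ : ∀ n : ℕ, 1 ≤ n → φ (g1 n) = inl (g2 n) + inl (g2 (n - 1)) * eps := by
    intro n hn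
    rw [hφa, key, hF]
    simp only [show n ≠ 0 by omega, if_false]
  -- multiplication against the generators
  have h1aux : ∀ i : Fin (d + 1), b1 i * g1 d = if i = 0 then g1 d else 0 := by
    intro i
    rw [hb1]
    by_cases hi0 : i = 0
    · rw [if_pos hi0, hi0]
      show g1 ((0 : Fin (d + 1)) : ℕ) * g1 d = g1 d
      rw [Fin.val_zero, h1mul, zero_add, Nat.choose_zero_right, one_smul]
    · rw [if_neg hi0, h1mul, h1top ((i : ℕ) + d)
        (by have : (i : ℕ) ≠ 0 := fun h => hi0 (Fin.ext h); omega), smul_zero]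
  have hmul1 : ∀ x : B1, x * g1 d = (b1.repr x 0) • g1 d :=
    aux_mul_eq b1 0 (g1 d) h1aux
  have h2aux : ∀ i : Fin d, b2 i * g2 (d - 1) = if i = 0 then g2 (d - 1) else 0 := by
    intro i
    rw [hb2]
    by_cases hi0 : i = 0
    · rw [if_pos hi0, hi0]
      show g2 ((0 : Fin d) : ℕ) * g2 (d - 1) = g2 (d - 1)
      rw [Fin.val_zero, h2mul, zero_add, Nat.choose_zero_right, one_smul]
    · rw [if_neg hi0, h2mul, h2top ((i : ℕ) + (d - 1))
        (by have : (i : ℕ) ≠ 0 := fun h => hi0 (Fin.ext h); omega), smul_zero]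
  have hmul2 : ∀ a : B2, a * g2 (d - 1) = (b2.repr a 0) • g2 (d - 1) :=
    aux_mul_eq b2 0 (g2 (d - 1)) h2aux
  have ht2fst : t2.fst = 0 := by
    simp [ht2]
  have ht2snd : t2.snd = g2 (d - 1) := by
    simp [ht2]
  have hmulT : ∀ x : DualNumber B2, x * t2 = (b2.repr x.fst 0) • t2 := by
    intro x
    ext
    · rw [fst_mul, fst_smul, ht2fst, mul_zero, smul_zero]
    · rw [DualNumber.snd_mul, snd_smul, ht2fst, ht2snd, mul_zero, add_zero, hmul2]
  -- membership characterizations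
  have mem1 : ∀ x : B1, x ∈ Ideal.span {g1 d} ↔ ∃ c : R, x = c • g1 d := by
    intro x
    constructor
    · intro hx
      obtain ⟨y, hy⟩ := Ideal.mem_span_singleton'.mp hx
      exact ⟨b1.repr y 0, by rw [← hy, hmul1]⟩
    · rintro ⟨c, rfl⟩
      rw [Algebra.smul_def]
      exact Ideal.mul_mem_left _ _ (Ideal.mem_span_singleton_self _)
  have mem2 : ∀ y : DualNumber B2, y ∈ Ideal.span {t2} ↔ ∃ c : R, y = c • t2 := by
    intro y
    constructor
    · intro hy
      obtain ⟨x, hx⟩ := Ideal.mem_span_singleton'.mp hy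
      exact ⟨b2.repr x.fst 0, by rw [← hx, hmulT]⟩
    · rintro ⟨c, rfl⟩
      rw [Algebra.smul_def]
      exact Ideal.mul_mem_left _ _ (Ideal.mem_span_singleton_self _)
  have hφt : φ (g1 d) = t2 := by
    rw [keyφ d hd, h2top d le_rfl, inl_zero, zero_add, ht2]
  refine ⟨φ, keyφ, ?_, ?_, ?_⟩
  · -- MapsTo
    intro x hx
    obtain ⟨c, rfl⟩ := (mem1 x).mp hx
    show φ _ ∈ (Ideal.span {t2} : Ideal (DualNumber B2))
    rw [map_smul, hφt]
    exact (mem2 _).mpr ⟨c, rfl⟩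
  · -- InjOn
    intro x hx y hy hxy
    obtain ⟨c, rfl⟩ := (mem1 x).mp hx
    obtain ⟨c', rfl⟩ := (mem1 y).mp hy
    simp only [map_smul, hφt] at hxy
    have hsnd : c • g2 (d - 1) = c' • g2 (d - 1) := by
      have := congrArg TrivSqZeroExt.snd hxy
      simpa only [snd_smul, ht2snd] using this
    have hcd : c = c' := by
      have hbe : g2 (d - 1) = b2 ⟨d - 1, by omega⟩ := by rw [hb2]
      rw [hbe] at hsnd
      have := congrArg (fun z => b2.repr z ⟨d - 1, by omega⟩) hsnd
      simpa [Module.Basis.repr_self] using this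
    rw [hcd]
  · -- SurjOn
    intro y hy
    obtain ⟨c, rfl⟩ := (mem2 y).mp hy
    refine ⟨c • g1 d, (mem1 _).mpr ⟨c, rfl⟩, ?_⟩
    rw [map_smul, hφt]
end

section
/- Let p be an odd prime, k a perfect field of characteristic p, W = W(k), m = 2p+1, λ = p² ∈ W_m. There is no element x ∈ W_m such that r = (λ + ε)γ¹(T) + x·γ^p(T) satisfies r^p = 0 in W_{m,p+1}[ε] (with ε² = 0): indeed r^p = p²·λ^{p-1}·(p-1)!·ε·γ^p(T) + (terms killed in W_{m,p+1}), and p²·λ^{p-1}·(p-1)! = p^{2p}·(p-1)! is nonzero in W_m, so r^p ≠ 0. -/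
open TrivSqZeroExt

private lemma aux_sq_zero_pow {R : Type*} [CommRing R] (a b : R) (hb : b * b = 0) :
    ∀ n : ℕ, (a + b) ^ (n + 1) = a ^ (n + 1) + ((n : R) + 1) * (a ^ n * b) := by
  intro n
  induction n with
  | zero => simp
  | succ n ih =>
    rw [pow_succ, ih]
    push_cast
    linear_combination ((n : R) + 1) * (a ^ n) * hb

private lemma aux_g1_pow {B : Type*} [CommRing B]
    (g : ℕ → B) (hone : g 0 = 1)
    (hmul : ∀ i j, g i * g j = ((i + j).choose i) • g (i + j)) :
    ∀ n : ℕ, g 1 ^ n = n.factorial • g n := by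
  intro n
  induction n with
  | zero => simp [hone]
  | succ n ih =>
    rw [pow_succ, ih, smul_mul_assoc, hmul, Nat.choose_succ_self_right, smul_smul,
      Nat.factorial_succ, Nat.mul_comm]

set_option maxHeartbeats 1000000 in
/-- For p an odd prime, k perfect, W = W(k), m = 2p+1, λ = p² ∈ W_m: no element
x ∈ W_m makes r = (λ + ε)γ¹(T) + x·γ^p(T) satisfy r^p = 0 in W_{m,p+1}[ε]; indeed
r^p = p²λ^{p-1}(p-1)!·ε·γ^p(T), whose coefficient is nonzero in W_m. -/
theorem stmt12
    (p : ℕ) [Fact p.Prime] (hodd : p ≠ 2)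
    (k : Type*) [Field k] [CharP k p] [ExpChar k p] [PerfectRing k p]
    (B : Type*) [CommRing B]
    [Algebra (WittVector p k ⧸ Ideal.span {(p : WittVector p k) ^ (2 * p + 1)}) B]
    (g : ℕ → B)
    (b : Module.Basis (Fin (p + 1))
      (WittVector p k ⧸ Ideal.span {(p : WittVector p k) ^ (2 * p + 1)}) B)
    (hbg : ∀ i : Fin (p + 1), b i = g i) (htop : ∀ n, p + 1 ≤ n → g n = 0)
    (hone : g 0 = 1)
    (hmul : ∀ i j, g i * g j = ((i + j).choose i) • g (i + j)) :
    let Wm := WittVector p k ⧸ Ideal.span {(p : WittVector p k) ^ (2 * p + 1)}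
    let lam : Wm := (p : Wm) ^ 2
    ((p : Wm) ^ 2 * lam ^ (p - 1) * ((p - 1).factorial : Wm) ≠ 0) ∧
    ∀ x : Wm,
      letI r : DualNumber B := (TrivSqZeroExt.inl (lam • g 1) : DualNumber B) +
        (DualNumber.eps : DualNumber B) * TrivSqZeroExt.inl (g 1) + (TrivSqZeroExt.inl (x • g p) : DualNumber B)
      r ^ p = ((p : Wm) ^ 2 * lam ^ (p - 1) * ((p - 1).factorial : Wm)) •
          ((DualNumber.eps : DualNumber B) * TrivSqZeroExt.inl (g p)) ∧
      r ^ p ≠ 0 := by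
  intro Wm lam
  have hp : p.Prime := Fact.out
  have hp3 : 3 ≤ p := by
    have := hp.two_le
    omega
  -- Part 1 : the coefficient is nonzero
  have hc : (p : Wm) ^ 2 * lam ^ (p - 1) * ((p - 1).factorial : Wm) ≠ 0 := by
    have key : ((p : WittVector p k) ^ 2 * ((p : WittVector p k) ^ 2) ^ (p - 1) *
        ((p - 1).factorial : WittVector p k)) =
        (p : WittVector p k) ^ (2 * p) * ((p - 1).factorial : WittVector p k) := by
      rw [← pow_mul, ← pow_add]
      congr 2
      omega
    intro h
    rw [show lam = (p : Wm) ^ 2 from rfl,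
      show ((p : Wm)) = Ideal.Quotient.mk _ ((p : WittVector p k)) from (map_natCast _ p).symm,
      show (((p - 1).factorial : Wm)) =
        Ideal.Quotient.mk _ (((p - 1).factorial : WittVector p k)) from (map_natCast _ _).symm,
      ← map_pow, ← map_pow, ← map_mul, ← map_mul, Ideal.Quotient.eq_zero_iff_mem,
      Ideal.mem_span_singleton, key] at h
    obtain ⟨a, ha⟩ := h
    have hp0 : (p : WittVector p k) ≠ 0 := (WittVector.irreducible p).ne_zero
    have hcancel : ((p - 1).factorial : WittVector p k) = (p : WittVector p k) * a := by
      apply mul_left_cancel₀ (pow_ne_zero (2 * p) hp0)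
      rw [ha, pow_succ]
      ring
    have hNk : (((p - 1).factorial : k)) ≠ 0 := by
      rw [Ne, CharP.cast_eq_zero_iff k p]
      intro hdvd
      have := (Nat.Prime.dvd_factorial hp).mp hdvd
      omega
    have hNunit : IsUnit (((p - 1).factorial : WittVector p k)) := by
      apply WittVector.isUnit_of_coeff_zero_ne_zero
      have h1 := map_natCast (WittVector.constantCoeff (p := p) (R := k)) ((p - 1).factorial)
      rw [WittVector.constantCoeff_apply] at h1
      rw [h1]
      exact hNk
    rw [hcancel] at hNunit
    exact (WittVector.irreducible p).not_isUnit (isUnit_of_mul_isUnit_left hNunit)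
  refine ⟨hc, fun x => ?_⟩
  -- abbreviations
  set c : Wm := (p : Wm) ^ 2 * lam ^ (p - 1) * ((p - 1).factorial : Wm) with hcdef
  set A : B := lam • g 1 + x • g p with hAdef
  -- basic multiplication facts in B
  have hzero : ∀ i j : ℕ, p + 1 ≤ i + j → g i * g j = 0 := by
    intro i j h
    rw [hmul, htop _ h, smul_zero]
  have hgp2 : (x • g p) * (x • g p) = 0 := by
    rw [smul_mul_smul_comm, hzero p p (by omega), smul_zero]
  have hg1n := aux_g1_pow g hone hmul
  have hlamg1pow : ∀ n : ℕ, (lam • g 1) ^ n = (lam ^ n * (n.factorial : Wm)) • g n := by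
    intro n
    rw [smul_pow, hg1n, ← Nat.cast_smul_eq_nsmul Wm, smul_smul]
  -- λ^p · p! = 0 in Wm
  have hpm : (p : Wm) ^ (2 * p + 1) = 0 := by
    rw [show ((p : Wm)) = Ideal.Quotient.mk _ ((p : WittVector p k)) from (map_natCast _ p).symm,
      ← map_pow, Ideal.Quotient.eq_zero_iff_mem]
    exact Ideal.subset_span rfl
  have hfac : (p.factorial : Wm) = (p : Wm) * ((p - 1).factorial : Wm) := by
    rw [← Nat.cast_mul]
    congr 1
    rw [Nat.mul_factorial_pred hp.ne_zero]
  have hz1 : lam ^ p * (p.factorial : Wm) = 0 := by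
    have h2 : lam ^ p * (p.factorial : Wm) =
        (p : Wm) ^ (2 * p + 1) * ((p - 1).factorial : Wm) := by
      rw [hfac, show lam = (p : Wm) ^ 2 from rfl, ← pow_mul]
      ring
    rw [h2, hpm, zero_mul]
  have hps : p - 1 + 1 = p := by omega
  have hmix : ∀ n : ℕ, p + 1 ≤ n + p → (lam • g 1) ^ n * (x • g p) = 0 := by
    intro n hn
    rw [hlamg1pow, smul_mul_assoc, mul_smul_comm x (g n) (g p), hzero n p hn, smul_zero, smul_zero]
  -- A^p = 0
  have hAp : A ^ p = 0 := by
    have h1 : (lam • g 1) ^ p = 0 := by rw [hlamg1pow, hz1, zero_smul]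
    calc A ^ p = A ^ (p - 1 + 1) := by rw [hps]
      _ = (lam • g 1) ^ (p - 1 + 1) +
          (((p - 1 : ℕ) : B) + 1) * ((lam • g 1) ^ (p - 1) * (x • g p)) :=
        aux_sq_zero_pow _ _ hgp2 (p - 1)
      _ = 0 := by
        rw [hps, h1, hmix (p - 1) (by omega), mul_zero, add_zero]
  -- A^(p-1)
  have hApm1 : A ^ (p - 1) = (lam ^ (p - 1) * (((p - 1).factorial : ℕ) : Wm)) • g (p - 1) := by
    have hps2 : p - 2 + 1 = p - 1 := by omega
    calc A ^ (p - 1) = A ^ (p - 2 + 1) := by rw [hps2]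
      _ = (lam • g 1) ^ (p - 2 + 1) +
          (((p - 2 : ℕ) : B) + 1) * ((lam • g 1) ^ (p - 2) * (x • g p)) :=
        aux_sq_zero_pow _ _ hgp2 (p - 2)
      _ = (lam • g 1) ^ (p - 1) := by
        rw [hmix (p - 2) (by omega), mul_zero, add_zero, hps2]
      _ = _ := hlamg1pow (p - 1)
  -- components of r
  set r : DualNumber B := (TrivSqZeroExt.inl (lam • g 1) : DualNumber B) +
      (DualNumber.eps : DualNumber B) * TrivSqZeroExt.inl (g 1) +
      (TrivSqZeroExt.inl (x • g p) : DualNumber B) with hrdef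
  have hrf : r.fst = A := by
    rw [hrdef, hAdef]
    simp only [fst_add, fst_mul, fst_inl, DualNumber.fst_eps, zero_mul, add_zero, zero_add]
  have hrs : r.snd = g 1 := by
    rw [hrdef]
    simp only [snd_add, snd_inl, DualNumber.snd_mul, DualNumber.snd_eps, DualNumber.fst_eps,
      fst_inl, zero_mul, one_mul, zero_add, add_zero]
  have hsndE : ((DualNumber.eps : DualNumber B) * TrivSqZeroExt.inl (g p)).snd = g p := by
    simp only [DualNumber.snd_mul, DualNumber.snd_eps, DualNumber.fst_eps, snd_inl, fst_inl,
      zero_mul, one_mul, zero_add]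
  have hfstE : ((DualNumber.eps : DualNumber B) * TrivSqZeroExt.inl (g p)).fst = 0 := by
    rw [fst_mul, DualNumber.fst_eps, zero_mul]
  have hchoose : p.choose (p - 1) = p := by
    have h1 : p.choose (p - 1) = p.choose 1 := by
      have := Nat.choose_symm (n := p) (k := 1) (by omega)
      simpa using this
    rw [h1, Nat.choose_one_right]
  have hgoal : r ^ p = c • ((DualNumber.eps : DualNumber B) * TrivSqZeroExt.inl (g p)) := by
    refine TrivSqZeroExt.ext ?_ ?_
    · rw [fst_pow, hrf, hAp, fst_smul, hfstE, smul_zero]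
    · rw [snd_pow, hrf, hrs, snd_smul, hsndE, Nat.pred_eq_sub_one, hApm1]
      rw [smul_eq_mul, smul_mul_assoc, hmul, hps, hchoose]
      rw [← Nat.cast_smul_eq_nsmul Wm p (g p), smul_smul, ← Nat.cast_smul_eq_nsmul Wm p _,
        smul_smul, hcdef]
      congr 1
      ring
  refine ⟨hgoal, ?_⟩
  intro h0
  apply hc
  have h1 : c • g p = 0 := by
    have h2 := congrArg TrivSqZeroExt.snd (hgoal.symm.trans h0)
    rw [snd_smul, hsndE, snd_zero] at h2
    exact h2
  have hip : ((⟨p, by omega⟩ : Fin (p + 1)) : ℕ) = p := rfl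
  rw [show g p = b ⟨p, by omega⟩ from by rw [hbg]] at h1
  have h3 := congrArg (fun v => b.repr v ⟨p, by omega⟩) h1
  simpa [Module.Basis.repr_self] using h3
end

section
/- Let W be a complete discrete valuation ring whose residue field k is algebraically closed, and let A be a complete discrete valuation ring that is a W-algebra with residue field k via the structure map. If W → A is finite (A is a totally ramified extension) or A ≅ k⟦T⟧, then there exists n ≥ 0 and a power series g ∈ W⟦T⟧ that is either a unit or zero such that A ≅ W⟦T⟧/(u - g·T^n), where u is a uniformizer of W. -/
open Ideal PowerSeries

namespace Stmt17Aux

variable {W A : Type*} [CommRing W] [CommRing A] [Algebra W A]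

/-- partial sums of the evaluation of a power series at ϖ -/
noncomputable def psum (ϖ : A) (f : PowerSeries W) (m : ℕ) : A :=
  ∑ i ∈ Finset.range m, algebraMap W A (PowerSeries.coeff i f) * ϖ ^ i

lemma smul_top_eq (I : Ideal A) : (I • ⊤ : Submodule A A) = I := by
  simp [smul_eq_mul, Ideal.mul_top]

lemma psum_add (ϖ : A) (f g : PowerSeries W) (m : ℕ) :
    psum ϖ (f + g) m = psum ϖ f m + psum ϖ g m := by
  simp [psum, add_mul, Finset.sum_add_distrib]

lemma psum_cauchy (ϖ : A) (f : PowerSeries W) {m m' : ℕ} (h : m ≤ m') :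
    psum ϖ f m' - psum ϖ f m ∈ Ideal.span {ϖ ^ m} := by
  rw [psum, psum, ← Finset.sum_range_add_sum_Ico _ h, add_sub_cancel_left]
  refine Ideal.sum_mem _ fun i hi => ?_
  rw [Finset.mem_Ico] at hi
  rw [show ϖ ^ i = ϖ ^ m * ϖ ^ (i - m) by rw [← pow_add]; congr 1; omega]
  exact Ideal.mul_mem_left _ _ (Ideal.mul_mem_right _ _ (Ideal.subset_span rfl))

/-- `a` is the limit of the partial sums of `f` evaluated at `ϖ`. -/
def IsLim (ϖ : A) (f : PowerSeries W) (a : A) : Prop :=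
  ∀ m, a - psum ϖ f m ∈ Ideal.span {ϖ ^ m}

variable {ϖ : A}

section
variable (hA : IsAdicComplete (Ideal.span {ϖ}) A)
include hA

lemma isLim_exists (f : PowerSeries W) : ∃ a, IsLim ϖ f a := by
  obtain ⟨L, hL⟩ := hA.toIsPrecomplete.prec (f := psum ϖ f) (fun {m m'} h => by
    rw [SModEq.sub_mem, smul_top_eq, Ideal.span_singleton_pow]
    simpa [neg_sub] using neg_mem (psum_cauchy ϖ f h))
  exact ⟨L, fun m => by
    have := (hL m).symm; rw [SModEq.sub_mem, smul_top_eq, Ideal.span_singleton_pow] at this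
    exact this⟩

lemma isLim_unique {f : PowerSeries W} {a b : A} (ha : IsLim ϖ f a) (hb : IsLim ϖ f b) :
    a = b := by
  have : a - b = 0 := by
    refine hA.toIsHausdorff.haus (a - b) fun m => ?_
    rw [SModEq.sub_mem, smul_top_eq, Ideal.span_singleton_pow, sub_zero]
    have := sub_mem (ha m) (hb m)
    simpa using this
  exact sub_eq_zero.mp this

end

lemma psum_eq_aeval (ϖ : A) (f : PowerSeries W) (m : ℕ) :
    psum ϖ f m = Polynomial.aeval ϖ (trunc m f) := by
  rw [psum, trunc_apply, map_sum]
  rw [show Finset.Ico 0 m = Finset.range m by rw [Finset.range_eq_Ico]]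
  exact Finset.sum_congr rfl fun i _ => by rw [Polynomial.aeval_monomial]

lemma aeval_mem_span {p : Polynomial W} {m : ℕ} (hp : ∀ k < m, p.coeff k = 0) :
    Polynomial.aeval ϖ p ∈ Ideal.span {ϖ ^ m} := by
  obtain ⟨q, rfl⟩ := (Polynomial.X_pow_dvd_iff).mpr hp
  rw [_root_.map_mul, map_pow, Polynomial.aeval_X]
  exact Ideal.mul_mem_right _ _ (Ideal.subset_span rfl)

lemma psum_mul (ϖ : A) (f g : PowerSeries W) (m : ℕ) :
    psum ϖ (f * g) m - psum ϖ f m * psum ϖ g m ∈ Ideal.span {ϖ ^ m} := by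
  rw [psum_eq_aeval, psum_eq_aeval, psum_eq_aeval, ← _root_.map_mul, ← map_sub]
  refine aeval_mem_span fun k hk => ?_
  rw [Polynomial.coeff_sub, Polynomial.coeff_mul, coeff_trunc, if_pos hk,
    PowerSeries.coeff_mul, sub_eq_zero]
  refine Finset.sum_congr rfl fun p hp => ?_
  rw [Finset.HasAntidiagonal.mem_antidiagonal] at hp
  rw [coeff_trunc, coeff_trunc, if_pos (by omega), if_pos (by omega)]

lemma isLim_add {f g : PowerSeries W} {a b : A} (ha : IsLim ϖ f a) (hb : IsLim ϖ g b) :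
    IsLim ϖ (f + g) (a + b) := fun m => by
  have := add_mem (ha m) (hb m)
  rw [psum_add]; convert this using 1; ring

lemma isLim_neg {f : PowerSeries W} {a : A} (ha : IsLim ϖ f a) :
    IsLim ϖ (-f) (-a) := fun m => by
  have := neg_mem (ha m)
  convert this using 1
  have : psum ϖ (-f) m = - psum ϖ f m := by simp [psum, Finset.sum_neg_distrib]
  rw [this]; ring

lemma isLim_mul {f g : PowerSeries W} {a b : A} (ha : IsLim ϖ f a) (hb : IsLim ϖ g b) :
    IsLim ϖ (f * g) (a * b) := fun m => by
  have h1 := psum_mul ϖ f g m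
  have h2 : a * b - psum ϖ f m * psum ϖ g m ∈ Ideal.span {ϖ ^ m} := by
    have : a * b - psum ϖ f m * psum ϖ g m
        = a * (b - psum ϖ g m) + psum ϖ g m * (a - psum ϖ f m) := by ring
    rw [this]
    exact add_mem (Ideal.mul_mem_left _ _ (hb m)) (Ideal.mul_mem_left _ _ (ha m))
  have := sub_mem h2 h1
  convert this using 1; ring

lemma isLim_stable {f : PowerSeries W} {n : ℕ} (hf : ∀ i, n ≤ i → PowerSeries.coeff i f = 0) :
    IsLim ϖ f (psum ϖ f n) := by
  intro m
  rcases le_total m n with h | h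
  · exact psum_cauchy ϖ f h
  · have : psum ϖ f m = psum ϖ f n := by
      rw [psum, psum, ← Finset.sum_range_add_sum_Ico _ h]
      have hz : ∑ i ∈ Finset.Ico n m, algebraMap W A (PowerSeries.coeff i f) * ϖ ^ i = 0 :=
        Finset.sum_eq_zero (fun i hi => by
          rw [Finset.mem_Ico] at hi
          rw [hf i hi.1, map_zero, zero_mul])
      rw [hz, add_zero]
    rw [this, sub_self]
    exact Ideal.zero_mem _

lemma isLim_C (w : W) : IsLim ϖ (PowerSeries.C w) (algebraMap W A w) := by
  have h := isLim_stable (ϖ := ϖ) (f := PowerSeries.C w) (n := 1)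
    (fun i hi => by rw [PowerSeries.coeff_C, if_neg (by omega)])
  have : psum ϖ (PowerSeries.C w) 1 = algebraMap W A w := by
    simp [psum]
  rwa [this] at h

lemma isLim_X : IsLim ϖ (PowerSeries.X : PowerSeries W) ϖ := by
  have h := isLim_stable (ϖ := ϖ) (f := (PowerSeries.X : PowerSeries W)) (n := 2)
    (fun i hi => by rw [PowerSeries.coeff_X, if_neg (by omega)])
  have : psum ϖ (PowerSeries.X : PowerSeries W) 2 = ϖ := by
    simp [psum, Finset.sum_range_succ, PowerSeries.coeff_X]
  rwa [this] at h

section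
variable (hA : IsAdicComplete (Ideal.span {ϖ}) A)

noncomputable def eval (hA : IsAdicComplete (Ideal.span {ϖ}) A) (f : PowerSeries W) : A :=
  (isLim_exists hA f).choose

lemma eval_spec (f : PowerSeries W) : IsLim ϖ f (eval hA f) :=
  (isLim_exists hA f).choose_spec

lemma eval_eq_of_isLim {f : PowerSeries W} {a : A} (h : IsLim ϖ f a) : eval hA f = a :=
  isLim_unique hA (eval_spec hA f) h

noncomputable def evalAlgHom (hA : IsAdicComplete (Ideal.span {ϖ}) A) :
    PowerSeries W →ₐ[W] A where
  toFun := eval hA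
  map_one' := eval_eq_of_isLim hA (by simpa using isLim_C (ϖ := ϖ) (1 : W))
  map_mul' x y := eval_eq_of_isLim hA (isLim_mul (eval_spec hA x) (eval_spec hA y))
  map_zero' := eval_eq_of_isLim hA (by simpa using isLim_C (ϖ := ϖ) (0 : W))
  map_add' x y := eval_eq_of_isLim hA (isLim_add (eval_spec hA x) (eval_spec hA y))
  commutes' w := by
    have h1 : (algebraMap W (PowerSeries W)) w = PowerSeries.C w := by
      simp [PowerSeries.algebraMap_apply]
    rw [h1]
    exact eval_eq_of_isLim hA (isLim_C w)

lemma evalAlgHom_X : evalAlgHom hA (PowerSeries.X : PowerSeries W) = ϖ :=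
  eval_eq_of_isLim hA isLim_X

lemma evalAlgHom_C (w : W) : evalAlgHom hA (PowerSeries.C w) = algebraMap W A w :=
  eval_eq_of_isLim hA (isLim_C w)

lemma evalAlgHom_isLim (f : PowerSeries W) : IsLim ϖ f (evalAlgHom hA f) :=
  eval_spec hA f

end

section Surj
variable (hA : IsAdicComplete (Ideal.span {ϖ}) A)

lemma eval_surjective
    (hres' : ∀ b : A, ∃ w : W, b - algebraMap W A w ∈ Ideal.span {ϖ}) :
    Function.Surjective (evalAlgHom (W := W) hA) := by
  intro a
  have step : ∀ b : A, ∃ p : W × A, b = algebraMap W A p.1 + ϖ * p.2 := by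
    intro b
    obtain ⟨w, hw⟩ := hres' b
    obtain ⟨b', hb'⟩ := Ideal.mem_span_singleton.mp hw
    exact ⟨⟨w, b'⟩, by linear_combination hb'⟩
  choose st hst using step
  let rem : ℕ → A := fun m => Nat.rec a (fun _ b => (st b).2) m
  let c : ℕ → W := fun m => (st (rem m)).1
  have key : ∀ m, a - psum ϖ (PowerSeries.mk c) m = ϖ ^ m * rem m := by
    intro m; induction m with
    | zero => simp [psum, rem]
    | succ m ih =>
      have h1 : rem m = algebraMap W A (c m) + ϖ * rem (m + 1) := hst (rem m)
      have h2 : psum ϖ (PowerSeries.mk c) (m + 1)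
          = psum ϖ (PowerSeries.mk c) m + algebraMap W A (c m) * ϖ ^ m := by
        rw [psum, psum, Finset.sum_range_succ, PowerSeries.coeff_mk]
      rw [h2, show a - (psum ϖ (PowerSeries.mk c) m + algebraMap W A (c m) * ϖ ^ m)
          = (a - psum ϖ (PowerSeries.mk c) m) - algebraMap W A (c m) * ϖ ^ m by ring,
        ih, h1]
      ring
  exact ⟨PowerSeries.mk c, eval_eq_of_isLim hA (fun m => by
    rw [key m]; exact Ideal.mul_mem_right _ _ (Ideal.subset_span rfl))⟩

lemma eval_of_coeff_eq_zero {f : PowerSeries W} {n : ℕ}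
    (hf : ∀ i, n ≤ i → PowerSeries.coeff i f = 0) :
    evalAlgHom hA f = psum ϖ f n :=
  eval_eq_of_isLim hA (isLim_stable hf)

end Surj

lemma zero_of_sum_eq_zero
    {W A : Type*} [CommRing W] [IsLocalRing W] [CommRing A] [IsDomain A] [Algebra W A]
    {u : W} (hu : IsLocalRing.maximalIdeal W = Ideal.span {u})
    {ϖ : A} (hϖ : Irreducible ϖ)
    {ε : A} (hε : IsUnit ε) {n : ℕ} (hn : algebraMap W A u = ε * ϖ ^ n)
    (hW : IsHausdorff (Ideal.span {u}) W)
    (c : ℕ → W) (hsum : ∑ i ∈ Finset.range n, algebraMap W A (c i) * ϖ ^ i = 0) :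
    ∀ i < n, c i = 0 := by
  have hϖ0 : ϖ ≠ 0 := hϖ.ne_zero
  have hu0 : algebraMap W A u ≠ 0 := by
    rw [hn]
    exact mul_ne_zero (hε.ne_zero) (pow_ne_zero _ hϖ0)
  have main : ∀ m : ℕ, ∀ c : ℕ → W,
      (∑ i ∈ Finset.range n, algebraMap W A (c i) * ϖ ^ i = 0) →
      ∀ i < n, c i ∈ Ideal.span {u ^ m} := by
    intro m
    induction m with
    | zero => intro c _ i _; simpa using Ideal.mem_top
    | succ m ih =>
      intro c hc i hi
      by_cases hall : ∀ j < n, c j ∈ Ideal.span {u}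
      · have hb : ∀ j, ∃ b : W, j < n → c j = u * b := by
          intro j
          by_cases hj : j < n
          · obtain ⟨b, hb⟩ := Ideal.mem_span_singleton.mp (hall j hj)
            exact ⟨b, fun _ => hb⟩
          · exact ⟨0, fun h => absurd h hj⟩
        choose b hbs using hb
        have hsum2 : ∑ j ∈ Finset.range n, algebraMap W A (b j) * ϖ ^ j = 0 := by
          have : algebraMap W A u * ∑ j ∈ Finset.range n, algebraMap W A (b j) * ϖ ^ j = 0 := by
            rw [Finset.mul_sum, ← hc]
            refine Finset.sum_congr rfl fun j hj => ?_
            rw [Finset.mem_range] at hj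
            rw [hbs j hj, _root_.map_mul]; ring
          exact (mul_eq_zero.mp this).resolve_left hu0
        obtain ⟨d, hd⟩ := Ideal.mem_span_singleton.mp (ih b hsum2 i hi)
        refine Ideal.mem_span_singleton.mpr ⟨d, ?_⟩
        rw [hbs i hi, hd, pow_succ]; ring
      · push_neg at hall
        exfalso
        have hex : ∃ j, j < n ∧ c j ∉ Ideal.span {u} := by
          obtain ⟨j, hj1, hj2⟩ := hall; exact ⟨j, hj1, hj2⟩
        classical
        let j := Nat.find hex
        obtain ⟨hjn, hju⟩ : j < n ∧ c j ∉ Ideal.span {u} := Nat.find_spec hex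
        have hunit : IsUnit (c j) := by
          by_contra hnu
          exact hju (hu ▸ ((IsLocalRing.mem_maximalIdeal (c j)).mpr hnu))
        have hterm : algebraMap W A (c j) * ϖ ^ j ∈ Ideal.span {ϖ ^ (j + 1)} := by
          have hrest : ∀ i ∈ (Finset.range n).erase j,
              algebraMap W A (c i) * ϖ ^ i ∈ Ideal.span {ϖ ^ (j + 1)} := by
            intro i hi'
            obtain ⟨hij, hin⟩ := Finset.mem_erase.mp hi'
            rw [Finset.mem_range] at hin
            rcases lt_or_gt_of_ne hij with h | h
            ·
              have hciu : c i ∈ Ideal.span {u} := by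
                by_contra hciu
                exact absurd (Nat.find_min hex h ⟨hin, hciu⟩) (fun x => x)
              obtain ⟨d, hd⟩ := Ideal.mem_span_singleton.mp hciu
              rw [hd]
              refine Ideal.mem_span_singleton.mpr
                ⟨ε * algebraMap W A d * ϖ ^ (n - (j + 1)) * ϖ ^ i, ?_⟩
              rw [_root_.map_mul, hn,
                show ϖ ^ n = ϖ ^ (j + 1) * ϖ ^ (n - (j + 1)) by
                  rw [← pow_add]; congr 1; omega]
              ring
            · refine Ideal.mem_span_singleton.mpr ?_
              exact Dvd.dvd.mul_left (pow_dvd_pow ϖ (by omega)) _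
          have hsplit := Finset.sum_erase_add (Finset.range n)
            (fun i => algebraMap W A (c i) * ϖ ^ i) (Finset.mem_range.mpr hjn)
          rw [hc] at hsplit
          have heq : algebraMap W A (c j) * ϖ ^ j
              = -∑ i ∈ (Finset.range n).erase j, algebraMap W A (c i) * ϖ ^ i := by
            linear_combination hsplit
          rw [heq]
          exact neg_mem (Ideal.sum_mem _ hrest)
        obtain ⟨x, hx⟩ := Ideal.mem_span_singleton.mp hterm
        have hdvd : ϖ ^ (j + 1) ∣ ϖ ^ j := by
          have h1 : ϖ ^ (j + 1) ∣ algebraMap W A (c j) * ϖ ^ j := ⟨x, hx⟩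
          exact (hunit.map (algebraMap W A)).dvd_mul_left.mp h1
        have : ϖ ∣ 1 := by
          rcases hdvd with ⟨y, hy⟩
          rw [pow_succ] at hy
          have h1 : (ϖ : A) ^ j * 1 = ϖ ^ j * (ϖ * y) := by linear_combination hy
          exact ⟨y, mul_left_cancel₀ (pow_ne_zero j hϖ0) h1⟩
        exact hϖ.not_isUnit (isUnit_of_dvd_one this)
  intro i hi
  refine hW.haus (c i) fun m => ?_
  rw [SModEq.sub_mem, smul_top_eq, Ideal.span_singleton_pow, sub_zero]
  exact main m c hsum i hi

section Division

variable {W : Type*} [CommRing W] {u : W}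

/-- limit of `∑ u^k • T k` in `W⟦X⟧`, coefficientwise. -/
noncomputable def seriesLim (hW : IsAdicComplete (Ideal.span {u}) W)
    (T : ℕ → PowerSeries W) : PowerSeries W :=
  PowerSeries.mk fun i => eval hW (PowerSeries.mk fun k => PowerSeries.coeff i (T k))

lemma seriesLim_spec (hW : IsAdicComplete (Ideal.span {u}) W) (T : ℕ → PowerSeries W)
    (i m : ℕ) :
    PowerSeries.coeff i (seriesLim hW T)
      - ∑ k ∈ Finset.range m, u ^ k * PowerSeries.coeff i (T k) ∈ Ideal.span {u ^ m} := by
  have h := eval_spec hW (PowerSeries.mk fun k => PowerSeries.coeff i (T k)) m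
  have hps : psum u (PowerSeries.mk fun k => PowerSeries.coeff i (T k)) m
      = ∑ k ∈ Finset.range m, u ^ k * PowerSeries.coeff i (T k) := by
    rw [psum]
    refine Finset.sum_congr rfl fun k _ => by
      rw [PowerSeries.coeff_mk]; simp [mul_comm]
  rw [hps] at h
  simpa [seriesLim, PowerSeries.coeff_mk] using h

lemma coeff_C_pow_mul (i k : ℕ) (h : PowerSeries W) :
    PowerSeries.coeff i ((PowerSeries.C u) ^ k * h) = u ^ k * PowerSeries.coeff i h := by
  rw [← map_pow, PowerSeries.coeff_C_mul]

lemma division (hW : IsAdicComplete (Ideal.span {u}) W)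
    {g G : PowerSeries W} (hg : g * G = 1) (n : ℕ) (f : PowerSeries W) :
    ∃ Q R : PowerSeries W,
      f = R + (PowerSeries.C u - g * PowerSeries.X ^ n) * Q ∧
      ∀ i, n ≤ i → PowerSeries.coeff i R = 0 := by
  set d : PowerSeries W := PowerSeries.C u - g * PowerSeries.X ^ n with hd
  let shift : PowerSeries W → PowerSeries W :=
    fun h => PowerSeries.mk fun i => PowerSeries.coeff (i + n) h
  let F : ℕ → PowerSeries W := fun k => Nat.rec f (fun _ h => G * shift h) k
  have hF : ∀ k, F (k + 1) = G * shift (F k) := fun k => rfl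
  let low : ℕ → PowerSeries W := fun k => F k - PowerSeries.X ^ n * shift (F k)
  have hlow : ∀ k i, n ≤ i → PowerSeries.coeff i (low k) = 0 := by
    intro k i hi
    have h1 : PowerSeries.coeff i (PowerSeries.X ^ n * shift (F k))
        = PowerSeries.coeff i (F k) := by
      rw [show i = (i - n) + n by omega, PowerSeries.coeff_X_pow_mul]
      simp only [shift, PowerSeries.coeff_mk]
    simp only [low, map_sub, h1, sub_self]
  have hstep : ∀ k, F k = low k - d * F (k + 1) + PowerSeries.C u * F (k + 1) := by
    intro k
    rw [hF k, hd]
    simp only [low]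
    linear_combination (-(PowerSeries.X ^ n * shift (F k)) : PowerSeries W) * hg
  have tele : ∀ m, f - (∑ k ∈ Finset.range m, (PowerSeries.C u) ^ k * low k)
      + d * (∑ k ∈ Finset.range m, (PowerSeries.C u) ^ k * F (k + 1))
      = (PowerSeries.C u) ^ m * F m := by
    intro m
    induction m with
    | zero =>
      simp only [Finset.range_zero, Finset.sum_empty, sub_zero, mul_zero, add_zero,
        pow_zero, one_mul]
      rfl
    | succ m ih =>
      rw [Finset.sum_range_succ, Finset.sum_range_succ]
      have h2 := hstep m
      linear_combination ih + ((PowerSeries.C u) ^ m : PowerSeries W) * h2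
        + (pow_succ (PowerSeries.C u) m) * F (m + 1)
  set Q := seriesLim hW (fun k => F (k + 1)) with hQ
  set R := seriesLim hW (fun k => low k) with hR
  have hR0 : ∀ i, n ≤ i → PowerSeries.coeff i R = 0 := by
    intro i hi
    have : (PowerSeries.mk fun k => PowerSeries.coeff i (low k)) = (0 : PowerSeries W) := by
      ext k
      rw [PowerSeries.coeff_mk, hlow k i hi, map_zero]
    rw [hR, seriesLim, PowerSeries.coeff_mk, this]
    exact eval_eq_of_isLim hW (fun m => by
      simp only [psum, map_zero, zero_mul, Finset.sum_const_zero, sub_zero]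
      exact Ideal.zero_mem _)
  refine ⟨-Q, R, ?_, hR0⟩
  have key : f - R + d * Q = 0 := by
    ext i
    rw [map_zero]
    refine hW.toIsHausdorff.haus _ fun m => ?_
    rw [SModEq.sub_mem, smul_top_eq, Ideal.span_singleton_pow, sub_zero]
    have e0 : f - R + d * Q = (PowerSeries.C u) ^ m * F m
        + ((∑ k ∈ Finset.range m, (PowerSeries.C u) ^ k * low k) - R)
        + d * (Q - ∑ k ∈ Finset.range m, (PowerSeries.C u) ^ k * F (k + 1)) := by
      linear_combination tele m
    rw [e0, map_add, map_add]
    refine add_mem (add_mem ?_ ?_) ?_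
    · rw [coeff_C_pow_mul]
      exact Ideal.mul_mem_right _ _ (Ideal.subset_span rfl)
    · have h2 := seriesLim_spec hW (fun k => low k) i m
      have e2 : PowerSeries.coeff i
          ((∑ k ∈ Finset.range m, (PowerSeries.C u) ^ k * low k) - R)
          = -(PowerSeries.coeff i (seriesLim hW fun k => low k)
            - ∑ k ∈ Finset.range m, u ^ k * PowerSeries.coeff i (low k)) := by
        rw [map_sub, map_sum, ← hR]
        rw [Finset.sum_congr rfl fun k _ => coeff_C_pow_mul i k (low k)]
        ring
      rw [e2, ← hR] at *
      exact neg_mem h2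
    · rw [PowerSeries.coeff_mul]
      refine Ideal.sum_mem _ fun p _ => Ideal.mul_mem_left _ _ ?_
      have h3 := seriesLim_spec hW (fun k => F (k + 1)) p.2 m
      have e3 : PowerSeries.coeff p.2
          (Q - ∑ k ∈ Finset.range m, (PowerSeries.C u) ^ k * F (k + 1))
          = PowerSeries.coeff p.2 (seriesLim hW fun k => F (k + 1))
            - ∑ k ∈ Finset.range m, u ^ k * PowerSeries.coeff p.2 (F (k + 1)) := by
        rw [map_sub, map_sum, ← hQ]
        rw [Finset.sum_congr rfl fun k _ => coeff_C_pow_mul p.2 k (F (k + 1))]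
      rw [e3]
      exact h3
  linear_combination key

end Division

lemma unit_pow_not_mem {A : Type*} [CommRing A] [IsDomain A] {ϖ : A} (hϖ : Irreducible ϖ)
    {x : A} (hx : IsUnit x) (j : ℕ) : x * ϖ ^ j ∉ Ideal.span {ϖ ^ (j + 1)} := by
  intro hmem
  have hdvd : ϖ ^ (j + 1) ∣ ϖ ^ j := by
    have h0 : ϖ ^ (j + 1) ∣ x * ϖ ^ j := Ideal.mem_span_singleton.mp hmem
    rw [mul_comm] at h0
    exact hx.dvd_mul_right.mp h0
  obtain ⟨y, hy⟩ := hdvd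
  rw [pow_succ] at hy
  have h1 : (ϖ : A) ^ j * 1 = ϖ ^ j * (ϖ * y) := by linear_combination hy
  exact hϖ.not_isUnit (isUnit_of_dvd_one ⟨y, mul_left_cancel₀ (pow_ne_zero j hϖ.ne_zero) h1⟩)

end Stmt17Aux

open Stmt17Aux in
/-- Heerema's structure theorem: a complete discrete valuation ring A over W with the
same (algebraically closed) residue field k, which is either finite over W or
isomorphic to k⟦T⟧, has the form W⟦T⟧/(u - g·Tⁿ) with g a unit or zero. -/
theorem stmt17
    (W : Type*) [CommRing W] [IsDomain W] [IsDiscreteValuationRing W]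
    [IsAdicComplete (IsLocalRing.maximalIdeal W) W]
    [IsAlgClosed (IsLocalRing.ResidueField W)]
    (u : W) (hu : Irreducible u)
    (A : Type*) [CommRing A] [IsDomain A] [IsDiscreteValuationRing A]
    [IsAdicComplete (IsLocalRing.maximalIdeal A) A] [Algebra W A]
    (hres : Function.Surjective
      ((IsLocalRing.residue A).comp (algebraMap W A)))
    (hker : RingHom.ker ((IsLocalRing.residue A).comp (algebraMap W A)) =
      IsLocalRing.maximalIdeal W)
    (hcase : Module.Finite W A ∨
      Nonempty (A ≃+* PowerSeries (IsLocalRing.ResidueField W))) :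
    ∃ (n : ℕ) (g : PowerSeries W), (IsUnit g ∨ g = 0) ∧
      Nonempty (A ≃ₐ[W] (PowerSeries W ⧸
        Ideal.span {PowerSeries.C u - g * PowerSeries.X ^ n})) := by
  classical
  have mW : IsLocalRing.maximalIdeal W = Ideal.span {u} := hu.maximalIdeal_eq
  obtain ⟨ϖ, hϖ⟩ := IsDiscreteValuationRing.exists_irreducible A
  have mA : IsLocalRing.maximalIdeal A = Ideal.span {ϖ} := hϖ.maximalIdeal_eq
  have hAc : IsAdicComplete (Ideal.span {ϖ}) A := mA ▸ inferInstance
  have hWc : IsAdicComplete (Ideal.span {u}) W := mW ▸ inferInstance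
  set φ : PowerSeries W →ₐ[W] A := evalAlgHom (W := W) hAc with hφ
  have hres' : ∀ b : A, ∃ w : W, b - algebraMap W A w ∈ Ideal.span {ϖ} := by
    intro b
    obtain ⟨w, hw⟩ := hres (IsLocalRing.residue A b)
    refine ⟨w, ?_⟩
    have hw' : IsLocalRing.residue A (algebraMap W A w) = IsLocalRing.residue A b := hw
    rw [← mA, ← IsLocalRing.residue_eq_zero_iff, map_sub, hw', sub_self]
  have hsurj : Function.Surjective φ := eval_surjective hAc hres'
  have hmemW : ∀ w : W, w ∈ IsLocalRing.maximalIdeal W ↔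
      IsLocalRing.residue A (algebraMap W A w) = 0 := by
    intro w
    rw [← hker]
    exact ⟨fun h => h, fun h => h⟩
  have humem : algebraMap W A u ∈ IsLocalRing.maximalIdeal A := by
    rw [← IsLocalRing.residue_eq_zero_iff]
    exact (hmemW u).mp (mW ▸ Ideal.subset_span rfl)
  by_cases hA0 : algebraMap W A u = 0
  · -- case g = 0 : A ≅ k⟦X⟧
    refine ⟨0, 0, Or.inr rfl, ?_⟩
    have hkerφ : RingHom.ker φ = Ideal.span {PowerSeries.C u - 0 * PowerSeries.X ^ 0} := by
      have he : PowerSeries.C u - 0 * PowerSeries.X ^ 0 = PowerSeries.C u := by ring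
      rw [he]
      apply le_antisymm
      · intro f hf
        have hφf : φ f = 0 := hf
        have hcoeffs : ∀ i, PowerSeries.coeff i f ∈ Ideal.span {u} := by
          by_contra hex
          push_neg at hex
          obtain ⟨j, hj⟩ := hex
          have hexx : ∃ j, PowerSeries.coeff j f ∉ Ideal.span {u} := ⟨j, hj⟩
          clear hj j
          set j := Nat.find hexx with hjdef
          have hju : PowerSeries.coeff j f ∉ Ideal.span {u} := Nat.find_spec hexx
          have hjunit : IsUnit (PowerSeries.coeff j f) := by
            by_contra hnu
            exact hju (mW ▸ ((IsLocalRing.mem_maximalIdeal _).mpr hnu))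
          have hps : psum ϖ f (j + 1) ∈ Ideal.span {ϖ ^ (j + 1)} := by
            have h1 := eval_spec hAc f (j + 1)
            rw [show eval hAc f = φ f from rfl, hφf, zero_sub] at h1
            simpa using neg_mem h1
          have hsmall : ∀ i < j, algebraMap W A (PowerSeries.coeff i f) * ϖ ^ i = 0 := by
            intro i hi
            have hciu : PowerSeries.coeff i f ∈ Ideal.span {u} :=
              not_not.mp (Nat.find_min hexx hi)
            obtain ⟨d, hd⟩ := Ideal.mem_span_singleton.mp hciu
            rw [hd, _root_.map_mul, hA0, zero_mul, zero_mul]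
          have hterm : algebraMap W A (PowerSeries.coeff j f) * ϖ ^ j
              ∈ Ideal.span {ϖ ^ (j + 1)} := by
            have : psum ϖ f (j + 1)
                = algebraMap W A (PowerSeries.coeff j f) * ϖ ^ j := by
              rw [psum, Finset.sum_range_succ]
              rw [Finset.sum_eq_zero (fun i hi =>
                hsmall i (Finset.mem_range.mp hi)), zero_add]
            rwa [this] at hps
          exact unit_pow_not_mem hϖ (hjunit.map (algebraMap W A)) j hterm
        choose b hb using fun i => Ideal.mem_span_singleton.mp (hcoeffs i)
        refine Ideal.mem_span_singleton.mpr ⟨PowerSeries.mk b, ?_⟩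
        ext i
        rw [PowerSeries.coeff_C_mul, PowerSeries.coeff_mk]
        exact hb i
      · rw [Ideal.span_le, Set.singleton_subset_iff]
        show PowerSeries.C u ∈ RingHom.ker φ
        rw [RingHom.mem_ker]
        show φ (PowerSeries.C u) = 0
        rw [hφ, evalAlgHom_C, hA0]
    exact ⟨(Ideal.quotientKerAlgEquivOfSurjective hsurj).symm.trans
      (Ideal.quotientEquivAlgOfEq W hkerφ)⟩
  · -- totally ramified case
    obtain ⟨n, ε, hn⟩ := IsDiscreteValuationRing.eq_unit_mul_pow_irreducible hA0 hϖ
    have hn1 : 1 ≤ n := by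
      by_contra h
      push_neg at h
      interval_cases n
      · rw [pow_zero, mul_one] at hn
        exact (IsLocalRing.mem_maximalIdeal _).mp humem (hn ▸ ε.isUnit)
    obtain ⟨g, hg⟩ := hsurj (ε : A)
    have hgunit : IsUnit g := by
      rw [PowerSeries.isUnit_iff_constantCoeff]
      by_contra hnu
      have hc0 : PowerSeries.constantCoeff g ∈ IsLocalRing.maximalIdeal W :=
        (IsLocalRing.mem_maximalIdeal _).mpr hnu
      have h0 : IsLocalRing.residue A (algebraMap W A (PowerSeries.constantCoeff g)) = 0 :=
        (hmemW _).mp hc0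
      have h1 := eval_spec hAc g 1
      have hps1 : psum ϖ g 1 = algebraMap W A (PowerSeries.constantCoeff g) := by
        simp [psum, PowerSeries.coeff_zero_eq_constantCoeff]
      rw [hps1, show eval hAc g = φ g from rfl, hg] at h1
      have : IsLocalRing.residue A (ε : A) = 0 := by
        rw [show ((ε : A)) = ((ε : A) - algebraMap W A (PowerSeries.constantCoeff g))
          + algebraMap W A (PowerSeries.constantCoeff g) by ring, map_add, h0, add_zero]
        rw [IsLocalRing.residue_eq_zero_iff, mA]
        simpa using h1
      rw [IsLocalRing.residue_eq_zero_iff] at this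
      exact (IsLocalRing.mem_maximalIdeal _).mp this ε.isUnit
    refine ⟨n, g, Or.inl hgunit, ?_⟩
    set d : PowerSeries W := PowerSeries.C u - g * PowerSeries.X ^ n with hd
    have hφd : φ d = 0 := by
      rw [hd, map_sub, _root_.map_mul, map_pow, hφ, evalAlgHom_C, evalAlgHom_X, ← hφ, hg, hn]
      exact sub_self _
    have hkerφ : RingHom.ker φ = Ideal.span {d} := by
      apply le_antisymm
      · intro f hf
        have hφf : φ f = 0 := hf
        obtain ⟨gu, hgu⟩ := hgunit
        have hgG : g * ((gu⁻¹ : Units (PowerSeries W)) : PowerSeries W) = 1 := by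
          rw [← hgu]; exact gu.mul_inv
        obtain ⟨Q, R, hQR, hR⟩ := division hWc hgG n f
        have hφR : φ R = 0 := by
          rw [hQR] at hφf
          rw [map_add, _root_.map_mul, hφd, zero_mul, add_zero] at hφf
          exact hφf
        have hRpsum : psum ϖ R n = 0 := by
          rw [← eval_of_coeff_eq_zero hAc hR, ← hφ]
          exact hφR
        have hall := zero_of_sum_eq_zero mW hϖ ε.isUnit hn hWc.toIsHausdorff
          (fun i => PowerSeries.coeff i R) (by rw [← psum]; exact hRpsum)
        have hR0 : R = 0 := by
          ext i
          rcases lt_or_ge i n with h | h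
          · simp only [map_zero]; exact hall i h
          · rw [hR i h, map_zero]
        rw [hQR, hR0, zero_add]
        exact Ideal.mem_span_singleton.mpr (Dvd.intro _ rfl)
      · rw [Ideal.span_le, Set.singleton_subset_iff]
        show d ∈ RingHom.ker φ
        rw [RingHom.mem_ker]
        exact hφd
    exact ⟨(Ideal.quotientKerAlgEquivOfSurjective hsurj).symm.trans
      (Ideal.quotientEquivAlgOfEq W hkerφ)⟩
end
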